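/- arXiv:2403.00217 — 4 statements merged into one kernel-verified Lean document; each statement's English description precedes it below -/
import Mathlib

section
/- Let (A, F) and (B, G) be interpreting lattices, M a finite many-valued structure over A and N a finite many-valued structure over B for the same relational language, and g : M → N a protomorphism (i.e., for each relation symbol R and tuple m̄, R^M(m̄) ∈ F implies R^N(g(m̄)) ∈ G). Then for every existential-∧-positive sentence ψ (a finite disjunction of ∧-primitive sentences), if the value of ψ in M lies in F then the value of ψ in N lies in G. -/
/-- The truth value of an existential-∧-positive sentence
`⋁_{j < d} ∃x̄ ⋀_{i < nc j} R_{sym j i}(x̄_{args j i})` in a finite many-valued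
structure over a lattice: the finite join over disjuncts of the join over
assignments of the meet of the atomic values. -/
def epValue {A : Type*} [Lattice A] {σ : Type*} (ar : σ → ℕ)
    {X : Type*} [Fintype X] [Nonempty X]
    (d : ℕ) (hd : 0 < d) (nv nc : Fin d → ℕ) (hnc : ∀ j, 0 < nc j)
    (sym : ∀ j : Fin d, Fin (nc j) → σ)
    (args : ∀ (j : Fin d) (i : Fin (nc j)), Fin (ar (sym j i)) → Fin (nv j))
    (rel : ∀ s : σ, (Fin (ar s) → X) → A) : A :=
  haveI : Nonempty (Fin d) := Fin.pos_iff_nonempty.mp hd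
  Finset.univ.sup' Finset.univ_nonempty fun j =>
    haveI : Nonempty (Fin (nc j)) := Fin.pos_iff_nonempty.mp (hnc j)
    Finset.univ.sup' Finset.univ_nonempty fun mbar : Fin (nv j) → X =>
      Finset.univ.inf' Finset.univ_nonempty fun i =>
        rel (sym j i) fun k => mbar (args j i k)

/-!
Because a prime filter is prime for `⊔` and closed under `⊓`, the value of an
existential-∧-positive sentence lies in the filter iff the sentence holds classically in the
two-valued structure whose true atomic facts are those with designated value. A protomorphism is
a homomorphism between these two-valued structures, and homomorphisms preserve
existential-positive sentences.
-/

namespace Finset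

variable {A ι : Type*} [Lattice A] {F : Set A} (s : Finset ι) (hs : s.Nonempty) (f : ι → A)

theorem sup'_mem_iff_exists (hF : ∀ a b : A, a ⊔ b ∈ F ↔ a ∈ F ∨ b ∈ F) :
    s.sup' hs f ∈ F ↔ ∃ i ∈ s, f i ∈ F := by
  induction hs using Nonempty.cons_induction with
  | singleton i => simp
  | cons i s hi hs ih => simp [sup'_cons hs, hF, ih]

theorem inf'_mem_iff_forall (hF : ∀ a b : A, a ⊓ b ∈ F ↔ a ∈ F ∧ b ∈ F) :
    s.inf' hs f ∈ F ↔ ∀ i ∈ s, f i ∈ F := by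
  induction hs using Nonempty.cons_induction with
  | singleton i => simp
  | cons i s hi hs ih => simp [inf'_cons hs, hF, ih]

end Finset

theorem epValue_mem_iff {A : Type*} [Lattice A] (F : Set A)
    (hFmeet : ∀ a b : A, a ⊓ b ∈ F ↔ a ∈ F ∧ b ∈ F)
    (hFjoin : ∀ a b : A, a ⊔ b ∈ F ↔ a ∈ F ∨ b ∈ F)
    {σ : Type*} (ar : σ → ℕ) {X : Type*} [Fintype X] [Nonempty X]
    (d : ℕ) (hd : 0 < d) (nv nc : Fin d → ℕ) (hnc : ∀ j, 0 < nc j)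
    (sym : ∀ j : Fin d, Fin (nc j) → σ)
    (args : ∀ (j : Fin d) (i : Fin (nc j)), Fin (ar (sym j i)) → Fin (nv j))
    (rel : ∀ s : σ, (Fin (ar s) → X) → A) :
    epValue ar d hd nv nc hnc sym args rel ∈ F ↔
      ∃ j, ∃ mbar : Fin (nv j) → X, ∀ i, rel (sym j i) (fun k => mbar (args j i k)) ∈ F := by
  simp [epValue, Finset.sup'_mem_iff_exists _ _ _ hFjoin, Finset.inf'_mem_iff_forall _ _ _ hFmeet]

/-- Protomorphisms between finite many-valued structures over interpreting lattices
preserve existential-∧-positive sentences: if `g : M → N` maps `F`-true atomic facts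
to `G`-true atomic facts, and the value of an e.∧.p-sentence `ψ` in `M` lies in `F`,
then its value in `N` lies in `G`. -/
theorem protomorphism_preserves_eland_positive
    {A : Type*} [Lattice A] (F : Set A)
    (hFmeet : ∀ a b : A, a ⊓ b ∈ F ↔ a ∈ F ∧ b ∈ F)
    (hFjoin : ∀ a b : A, a ⊔ b ∈ F ↔ a ∈ F ∨ b ∈ F)
    {B : Type*} [Lattice B] (G : Set B)
    (hGmeet : ∀ a b : B, a ⊓ b ∈ G ↔ a ∈ G ∧ b ∈ G)
    (hGjoin : ∀ a b : B, a ⊔ b ∈ G ↔ a ∈ G ∨ b ∈ G)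
    {σ : Type*} (ar : σ → ℕ)
    {M : Type*} [Fintype M] [Nonempty M]
    {N : Type*} [Fintype N] [Nonempty N]
    (relM : ∀ s : σ, (Fin (ar s) → M) → A)
    (relN : ∀ s : σ, (Fin (ar s) → N) → B)
    (g : M → N)
    (hproto : ∀ (s : σ) (mbar : Fin (ar s) → M), relM s mbar ∈ F → relN s (g ∘ mbar) ∈ G)
    (d : ℕ) (hd : 0 < d) (nv nc : Fin d → ℕ) (hnc : ∀ j, 0 < nc j)
    (sym : ∀ j : Fin d, Fin (nc j) → σ)
    (args : ∀ (j : Fin d) (i : Fin (nc j)), Fin (ar (sym j i)) → Fin (nv j)) :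
    epValue ar d hd nv nc hnc sym args relM ∈ F →
      epValue ar d hd nv nc hnc sym args relN ∈ G := by
  intro h
  rw [epValue_mem_iff F hFmeet hFjoin] at h
  obtain ⟨j, mbar, hj⟩ := h
  rw [epValue_mem_iff G hGmeet hGjoin]
  exact ⟨j, g ∘ mbar, fun i => hproto _ _ (hj i)⟩
end

section
/- There exists a lattice A with a non-prime filter F, a relational language with one unary relation symbol R, two structures M₁, M₂ over A with the same two-element domain, and a protomorphism from M₁ to M₂, such that the existential sentence ∃z R(z) has value in F in M₁ but value not in F in M₂. Concretely, take A the four-element Boolean algebra {⊥, a, b, ⊤} with F = {⊤}, M₁ interpreting R(x) = a and R(y) = b, M₂ interpreting R(x) = a and R(y) = ⊥, and the identity map on the domain {x, y}. -/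
/-- The four-element Boolean algebra, realised as `Bool × Bool`, with the two
incomparable elements `a = (true, false)` and `b = (false, true)`. -/
def fourA : Bool × Bool := (true, false)

def fourB : Bool × Bool := (false, true)

/-- Structure `M₁`, interpreting the unary relation `R` on the two-element domain
`Bool` by `R(x) = a`, `R(y) = b`. -/
def relM1 : Bool → Bool × Bool := fun z => if z then fourB else fourA

/-- Structure `M₂`, interpreting `R` by `R(x) = a`, `R(y) = ⊥`. -/
noncomputable def relM2 : Bool → Bool × Bool := fun z => if z then ⊥ else fourA

/-- With the non-prime filter `F = {⊤}` of the four-element Boolean algebra, the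
identity map is a protomorphism from `M₁` to `M₂`, the value of `∃z R(z)` in `M₁`
(namely `R(x) ⊔ R(y)`) lies in `F`, yet its value in `M₂` does not: so primeness of
`F` is necessary for preservation of existential sentences under protomorphisms. -/
theorem nonprime_filter_counterexample :
    (¬ ∀ x y : Bool × Bool, x ⊔ y = ⊤ → x = ⊤ ∨ y = ⊤) ∧
    (∀ m : Bool, relM1 m = ⊤ → relM2 (id m) = ⊤) ∧
    (relM1 false ⊔ relM1 true = ⊤) ∧
    (relM2 false ⊔ relM2 true ≠ ⊤) := by
  refine ⟨fun h => ?_, ?_, ?_, ?_⟩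
  · rcases h (true, false) (false, true) rfl with h | h <;> simp [Prod.ext_iff] at h
  · intro m; cases m <;> simp [relM1, relM2, fourA, fourB, Prod.ext_iff, Top.top]
  · decide
  · simp [relM2, fourA, Prod.ext_iff]
end

section
/- Sentences built using the strong conjunction * of the standard UL-chain are not preserved under homomorphisms: with the UL-chain on [0,1] having unit 1/2 and truth filter F = {a : a ≥ 1/2}, consider a language with two unary predicates R, P and two one-element structures M₁ (R↦5/6, P↦1/3) and M₂ (R↦4/6, P↦1/6). The identity map is a protomorphism from M₁ to M₂, the value of ∃x∃y (R(x) * P(y)) in M₁ is ≥ 1/2, but its value in M₂ is < 1/2. -/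
/-- The strong conjunction of the standard UL-chain on `[0,1]`:
`x * y = min x y` if `y ≤ 1 - x`, and `max x y` otherwise; its unit is `1/2` and
the truth filter is `{a : a ≥ 1/2}`. -/
noncomputable def ulStar (x y : ℝ) : ℝ := if y ≤ 1 - x then min x y else max x y

/-- Failure of preservation of strong conjunction under (proto)homomorphisms on the
standard UL-chain: with one-element structures `M₁` (`R ↦ 5/6`, `P ↦ 1/3`) and `M₂`
(`R ↦ 4/6`, `P ↦ 1/6`), the identity map is a protomorphism (truth of atomic facts,
i.e. value `≥ 1/2`, is preserved), the value of `∃x∃y (R(x) * P(y))` in `M₁` is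
`≥ 1/2`, but its value in `M₂` is `< 1/2`. -/
theorem ulStar_not_preserved :
    ((1 / 2 : ℝ) ≤ 5 / 6 → (1 / 2 : ℝ) ≤ 4 / 6) ∧
    ((1 / 2 : ℝ) ≤ 1 / 3 → (1 / 2 : ℝ) ≤ 1 / 6) ∧
    (1 / 2 : ℝ) ≤ ulStar (5 / 6) (1 / 3) ∧
    ulStar (4 / 6) (1 / 6) < 1 / 2 := by
  refine ⟨fun _ => by norm_num, fun h => by norm_num at h, ?_, ?_⟩ <;>
    · unfold ulStar
      norm_num
end

section
/- If A, B are integral commutative residuated lattices, (f,g) : (A,M) → (B,N) is a monomorphism, M is ∃-witnessed, and ψ is an existential-positive sentence with ‖ψ‖^M = 1_A, then ‖ψ‖^N ≥ 1_B, i.e., N satisfies ψ. -/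
/-- Existential-positive formulas in a relational language `σ` with arities `ar`,
with `n` free variables: built from atomic formulas using `∧`, `∨`, the strong
conjunction `*`, and `∃`. -/
inductive EPForm (σ : Type*) (ar : σ → ℕ) : ℕ → Type _
  | atom {n : ℕ} (s : σ) (targs : Fin (ar s) → Fin n) : EPForm σ ar n
  | conj {n : ℕ} : EPForm σ ar n → EPForm σ ar n → EPForm σ ar n
  | disj {n : ℕ} : EPForm σ ar n → EPForm σ ar n → EPForm σ ar n
  | smul {n : ℕ} : EPForm σ ar n → EPForm σ ar n → EPForm σ ar n
  | ex {n : ℕ} : EPForm σ ar (n + 1) → EPForm σ ar n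

/-- Truth value of an existential-positive formula in a many-valued structure over
a (complete) lattice-ordered commutative monoid: `∧`, `∨` are meet and join, `*`
is the monoid operation, and `∃` is the supremum over the domain. -/
noncomputable def EPForm.val {A : Type*} [CompleteLattice A] [CommMonoid A]
    {σ : Type*} {ar : σ → ℕ} {X : Type*} [Nonempty X]
    (rel : ∀ s : σ, (Fin (ar s) → X) → A) :
    ∀ {n : ℕ}, EPForm σ ar n → (Fin n → X) → A
  | _, .atom s targs, v => rel s fun k => v (targs k)
  | _, .conj φ ψ, v => φ.val rel v ⊓ ψ.val rel v
  | _, .disj φ ψ, v => φ.val rel v ⊔ ψ.val rel v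
  | _, .smul φ ψ, v => φ.val rel v * ψ.val rel v
  | _, .ex φ, v => ⨆ m : X, φ.val rel (Fin.cons m v)

/-- Monomorphisms preserve the values of existential-positive formulas on
∃-witnessed structures: if `A`, `B` are integral commutative residuated lattices,
`f : A → B` preserves `⊔`, `⊓`, `*`, `1`, and `g : M → N` satisfies
`f (R^M(mbar)) ≤ R^N(g ∘ mbar)`, then for every existential-positive formula `φ`
and assignment `v` in `M`, `f ‖φ(v)‖^M ≤ ‖φ(g ∘ v)‖^N`. -/
theorem monomorphism_preserves_ep_sentence
    {A : Type*} [CompleteLattice A] [CommMonoid A] [CovariantClass A A (· * ·) (· ≤ ·)]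
    (hAres : ∀ a b : A, ∃ c : A, ∀ x : A, a * x ≤ b ↔ x ≤ c)
    (hAint : ∀ a : A, a ≤ 1)
    {B : Type*} [CompleteLattice B] [CommMonoid B] [CovariantClass B B (· * ·) (· ≤ ·)]
    (hBres : ∀ a b : B, ∃ c : B, ∀ x : B, a * x ≤ b ↔ x ≤ c)
    (hBint : ∀ b : B, b ≤ 1)
    {σ : Type*} {ar : σ → ℕ}
    {M : Type*} [Nonempty M] {N : Type*} [Nonempty N]
    (relM : ∀ s : σ, (Fin (ar s) → M) → A)
    (relN : ∀ s : σ, (Fin (ar s) → N) → B)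
    (f : A → B) (g : M → N)
    (hfjoin : ∀ a b : A, f (a ⊔ b) = f a ⊔ f b)
    (hfmeet : ∀ a b : A, f (a ⊓ b) = f a ⊓ f b)
    (hfmul : ∀ a b : A, f (a * b) = f a * f b)
    (hfone : f 1 = 1)
    (hmono : ∀ (s : σ) (mbar : Fin (ar s) → M), f (relM s mbar) ≤ relN s (g ∘ mbar))
    (hwit : ∀ {n : ℕ} (φ : EPForm σ ar (n + 1)) (v : Fin n → M),
      ∃ m : M, (EPForm.ex φ).val relM v = φ.val relM (Fin.cons m v))
    (ψ : EPForm σ ar 0)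
    (hM : ψ.val relM (fun i => i.elim0) = 1) :
    (1 : B) ≤ ψ.val relN (fun i => i.elim0) := by
  have hfmono : ∀ a b : A, a ≤ b → f a ≤ f b := by
    intro a b hab
    have : f a ⊔ f b = f b := by rw [← hfjoin, sup_eq_right.mpr hab]
    exact le_sup_left.trans this.le
  have key : ∀ {n : ℕ} (φ : EPForm σ ar n) (v : Fin n → M),
      f (φ.val relM v) ≤ φ.val relN (g ∘ v) := by
    intro n φ
    induction φ with
    | atom s targs =>
      intro v
      exact hmono s _
    | conj φ₁ φ₂ ih₁ ih₂ =>
      intro v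
      simp only [EPForm.val, hfmeet]
      exact inf_le_inf (ih₁ v) (ih₂ v)
    | disj φ₁ φ₂ ih₁ ih₂ =>
      intro v
      simp only [EPForm.val, hfjoin]
      exact sup_le_sup (ih₁ v) (ih₂ v)
    | smul φ₁ φ₂ ih₁ ih₂ =>
      intro v
      simp only [EPForm.val, hfmul]
      calc f (φ₁.val relM v) * f (φ₂.val relM v)
          ≤ φ₁.val relN (g ∘ v) * f (φ₂.val relM v) := by
            rw [mul_comm, mul_comm (φ₁.val relN (g ∘ v))]
            exact mul_le_mul_right (ih₁ v) _
        _ ≤ φ₁.val relN (g ∘ v) * φ₂.val relN (g ∘ v) := mul_le_mul_right (ih₂ v) _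
    | ex φ ih =>
      intro v
      obtain ⟨m, hm⟩ := hwit φ v
      have : g ∘ Fin.cons m v = Fin.cons (g m) (g ∘ v) := by
        funext i
        refine Fin.cases ?_ ?_ i <;> simp
      calc f ((EPForm.ex φ).val relM v) = f (φ.val relM (Fin.cons m v)) := by rw [hm]
        _ ≤ φ.val relN (g ∘ Fin.cons m v) := ih _
        _ ≤ ⨆ x : N, φ.val relN (Fin.cons x (g ∘ v)) := by
            rw [this]; exact le_iSup (fun x => φ.val relN (Fin.cons x (g ∘ v))) (g m)
  have h := key ψ (fun i => i.elim0)
  rw [hM, hfone] at h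
  refine h.trans (le_of_eq ?_)
  congr 1
  funext i
  exact i.elim0
end
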